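/- (Matrix polynomial block encoding — algebraic core.) Let H be an n-qubit operator with a (λ-normalized) FOQCS-LCU block encoding, and let p_d(H) = Σ_{k=0}^{d} a_k H^k with a_k ∈ ℂ. Set w_k = sqrt(|a_k| λ^k), W = Σ_{k=0}^{d} w_k² = Σ_k |a_k| λ^k, φ_k = arg(a_{k+1}) − arg(a_k), and define unary-register states |R_out⟩ = W^{-1/2} Σ_{k=0}^{d} e^{i Σ_{j<k} φ_j} w_k |k_u⟩ and |L_out⟩ = W^{-1/2} Σ_k w_k |k_u⟩. Suppose the combined circuit acts so that, conditioned on the unary ancilla being in |k_u⟩ and post-selecting inner block-encoding ancillas on zero, the system undergoes λ^{-k} H^k. Then the full post-selected operator equals ⟨L_out| (Σ_k |k_u⟩⟨k_u| ⊗ λ^{-k} H^k) |R_out⟩ = e^{-i arg(a_0)} W^{-1} p_d(H). In particular, up to the global phase e^{-i arg(a_0)}, the circuit block-encodes p_d(H)/W. -/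

import Mathlib

/-!
Sandwiching `G = Σ_k |k_u⟩⟨k_u| ⊗ λ^{-k} H^k` between the unary states picks out the diagonal
terms `conj (L_k) λ^{-k} H^k R_k`. Since `|L_out⟩` carries the amplitudes `w_k / √W` and `|R_out⟩`
the amplitudes `e^{i(arg a_k - arg a_0)} w_k / √W` (the phases telescope), the `k`-th term is
`e^{-i arg a_0} |a_k| e^{i arg a_k} λ^k λ^{-k} H^k / W = e^{-i arg a_0} a_k H^k / W`. -/

open Matrix Finset

noncomputable section

/-- The unary encoding `|k_u⟩ = |1⟩^{⊗k}|0⟩^{⊗(d−k)}` as a bit string. -/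
def unary (d : ℕ) (k : ℕ) : Fin d → Fin 2 :=
  fun ℓ => if (ℓ : ℕ) < k then 1 else 0

lemma unary_injOn (d : ℕ) : Set.InjOn (unary d) (Set.Iic d) := by
  intro k hk m hm h
  by_contra hne
  wlog hlt : k < m generalizing k m
  · exact this hm hk h.symm (Ne.symm hne) (lt_of_le_of_ne (not_lt.mp hlt) (Ne.symm hne))
  have := congrFun h ⟨k, lt_of_lt_of_le hlt hm⟩
  simp [unary, hlt] at this

lemma sum_mul_ite_apply_eq_of_injOn {ι R : Type*} [DecidableEq ι] [Semiring R]
    {s : Finset ℕ} {e : ℕ → ι} (he : Set.InjOn e s) (c : ℕ → R) {k : ℕ} (hk : k ∈ s) :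
    ∑ m ∈ s, c m * (if e k = e m then 1 else 0) = c k := by
  rw [sum_eq_single_of_mem k hk (fun m hm hmk => ?_)]
  · simp
  · simp [he.ne hk hm hmk.symm]

lemma sum_sum_mul_blockDiagonal_mul {ι R : Type*} [Fintype ι] [DecidableEq ι] [CommSemiring R]
    (s : Finset ℕ) (e : ℕ → ι) (B : ℕ → R) (f g : ι → R) :
    ∑ x, ∑ y, f x * (∑ k ∈ s, (if x = e k ∧ y = e k then 1 else 0) * B k) * g y
      = ∑ k ∈ s, f (e k) * B k * g (e k) := by
  simp only [mul_sum, sum_mul]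
  simp_rw [sum_comm (s := (univ : Finset ι)) (t := s)]
  refine sum_congr rfl fun k _ => ?_
  simp [ite_and]

lemma exp_I_mul_arg_sub_arg_mul_norm (z w : ℂ) :
    Complex.exp (Complex.I * ((z.arg - w.arg : ℝ) : ℂ)) * ‖z‖
      = Complex.exp (-(Complex.I * w.arg)) * z := by
  conv_rhs => rw [← Complex.norm_mul_exp_arg_mul_I z, mul_left_comm, ← Complex.exp_add]
  push_cast
  ring_nf

theorem stmt14_general (n d : ℕ)
    (H : Matrix (Fin n → Fin 2) (Fin n → Fin 2) ℂ)
    (lam : ℝ) (hlam : 0 < lam)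
    (a : ℕ → ℂ)
    (w : ℕ → ℝ) (hw : ∀ k, w k = Real.sqrt (‖a k‖ * lam ^ k))
    (Wn : ℝ) (hWn : Wn = ∑ k ∈ Finset.range (d + 1), (w k) ^ 2)
    (φ : ℕ → ℝ) (hφ : ∀ k, φ k = (a (k + 1)).arg - (a k).arg)
    (Rout Lout : (Fin d → Fin 2) → ℂ)
    (hR : Rout = fun x => (Real.sqrt Wn : ℂ)⁻¹ *
      ∑ k ∈ Finset.range (d + 1),
        Complex.exp (Complex.I * (∑ j ∈ Finset.range k, φ j)) * (w k : ℂ) *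
          (if x = unary d k then 1 else 0))
    (hL : Lout = fun x => (Real.sqrt Wn : ℂ)⁻¹ *
      ∑ k ∈ Finset.range (d + 1),
        (w k : ℂ) * (if x = unary d k then 1 else 0))
    (G : Matrix ((Fin d → Fin 2) × (Fin n → Fin 2))
                ((Fin d → Fin 2) × (Fin n → Fin 2)) ℂ)
    (hG : G = fun x y => ∑ k ∈ Finset.range (d + 1),
      (if x.1 = unary d k ∧ y.1 = unary d k then 1 else 0) *
        (((lam : ℂ) ^ k)⁻¹ * (H ^ k) x.2 y.2)) :
    (fun u v => ∑ x : Fin d → Fin 2, ∑ y : Fin d → Fin 2,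
        (starRingEnd ℂ) (Lout x) * G (x, u) (y, v) * Rout y)
    = fun u v => Complex.exp (-(Complex.I * (a 0).arg)) * (Wn : ℂ)⁻¹ *
        (∑ k ∈ Finset.range (d + 1), a k • H ^ k) u v := by
  have hunary : Set.InjOn (unary d) (range (d + 1)) := fun k hk m hm =>
    unary_injOn d (by simpa [Nat.lt_succ_iff] using hk) (by simpa [Nat.lt_succ_iff] using hm)
  have hsqrtW : (Real.sqrt Wn : ℂ)⁻¹ * (Real.sqrt Wn : ℂ)⁻¹ = (Wn : ℂ)⁻¹ := by
    rw [← mul_inv, ← Complex.ofReal_mul,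
      Real.mul_self_sqrt (hWn ▸ sum_nonneg fun k _ => sq_nonneg (w k))]
  have hw_sq (k : ℕ) : (w k : ℂ) * w k = ‖a k‖ * (lam : ℂ) ^ k := by
    rw [hw, ← Complex.ofReal_mul, Real.mul_self_sqrt (by positivity)]
    push_cast; ring
  have hphase (k : ℕ) : ∑ j ∈ range k, φ j = (a k).arg - (a 0).arg := by
    simp only [hφ]
    exact sum_range_sub (fun j => (a j).arg) k
  funext u v
  simp only [hG]
  rw [sum_sum_mul_blockDiagonal_mul, Matrix.sum_apply, mul_sum]
  refine sum_congr rfl fun k hk => ?_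
  simp only [hL, hR, sum_mul_ite_apply_eq_of_injOn hunary _ hk, hphase, Matrix.smul_apply,
    smul_eq_mul]
  rw [map_mul, map_inv₀, Complex.conj_ofReal, Complex.conj_ofReal]
  have hlam_k : (lam : ℂ) ^ k ≠ 0 := by exact_mod_cast (pow_pos hlam k).ne'
  set E := Complex.exp (Complex.I * ((a k).arg - (a 0).arg : ℝ))
  calc _ = ((√Wn : ℂ)⁻¹ * (√Wn : ℂ)⁻¹) * ((w k : ℂ) * w k) * ((lam : ℂ) ^ k)⁻¹ * E
          * (H ^ k) u v := by
        ring
    _ = (Wn : ℂ)⁻¹ * (E * ‖a k‖) * (H ^ k) u v := by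
        rw [hsqrtW, hw_sq]; field_simp
    _ = _ := by
        rw [exp_I_mul_arg_sub_arg_mul_norm]; ring

/-- matrix polynomial block encoding — algebraic core: with
`w_k = √(|a_k| λ^k)`, `W = Σ w_k²`, `φ_k = arg(a_{k+1}) − arg(a_k)`, the unary
outer states `|R_out⟩, |L_out⟩`, and the diagonal-in-unary operator
`G = Σ_k |k_u⟩⟨k_u| ⊗ λ^{-k} H^k`, the post-selected operator
`⟨L_out| G |R_out⟩` equals `e^{-i arg(a_0)} W^{-1} p_d(H)` with
`p_d(H) = Σ_{k=0}^{d} a_k H^k`. -/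
theorem stmt14 (n d : ℕ)
    (H : Matrix (Fin n → Fin 2) (Fin n → Fin 2) ℂ)
    (lam : ℝ) (hlam : 0 < lam)
    (a : ℕ → ℂ) (ha0 : a 0 ≠ 0)
    (w : ℕ → ℝ) (hw : ∀ k, w k = Real.sqrt (‖a k‖ * lam ^ k))
    (Wn : ℝ) (hWn : Wn = ∑ k ∈ Finset.range (d + 1), (w k) ^ 2)
    (φ : ℕ → ℝ) (hφ : ∀ k, φ k = (a (k + 1)).arg - (a k).arg)
    (Rout Lout : (Fin d → Fin 2) → ℂ)
    (hR : Rout = fun x => (Real.sqrt Wn : ℂ)⁻¹ *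
      ∑ k ∈ Finset.range (d + 1),
        Complex.exp (Complex.I * (∑ j ∈ Finset.range k, φ j)) * (w k : ℂ) *
          (if x = unary d k then 1 else 0))
    (hL : Lout = fun x => (Real.sqrt Wn : ℂ)⁻¹ *
      ∑ k ∈ Finset.range (d + 1),
        (w k : ℂ) * (if x = unary d k then 1 else 0))
    (G : Matrix ((Fin d → Fin 2) × (Fin n → Fin 2))
                ((Fin d → Fin 2) × (Fin n → Fin 2)) ℂ)
    (hG : G = fun x y => ∑ k ∈ Finset.range (d + 1),
      (if x.1 = unary d k ∧ y.1 = unary d k then 1 else 0) *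
        (((lam : ℂ) ^ k)⁻¹ * (H ^ k) x.2 y.2)) :
    (fun u v => ∑ x : Fin d → Fin 2, ∑ y : Fin d → Fin 2,
        (starRingEnd ℂ) (Lout x) * G (x, u) (y, v) * Rout y)
    = fun u v => Complex.exp (-(Complex.I * (a 0).arg)) * (Wn : ℂ)⁻¹ *
        (∑ k ∈ Finset.range (d + 1), a k • H ^ k) u v :=
  stmt14_general n d H lam hlam a w hw Wn hWn φ hφ Rout Lout hR hL G hG
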